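/- Define the orthonormal basis |ψ₀⟩ = cos(π/8)|0⟩ + sin(π/8)|1⟩ and |ψ₁⟩ = cos(5π/8)|0⟩ + sin(5π/8)|1⟩ of ℂ², and let M_b = |ψ_b⟩⟨ψ_b| for b ∈ {0,1}. Then for the four states ψ_{0,0}=|0⟩, ψ_{0,1}=|1⟩, ψ_{1,0}=(|0⟩+|1⟩)/√2, ψ_{1,1}=(|0⟩−|1⟩)/√2, one has (1/4)·Σ_{q,b} ⟨ψ_{q,b}| M_b |ψ_{q,b}⟩ = cos²(π/8). In particular, the bound cos²(π/8) in the single-round B₈₄ task is tight. -/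

import Mathlib

open Matrix ComplexOrder

/-- The four BB84 states `H^q |b⟩` as vectors in `ℂ²`. -/
noncomputable def bb84 (q b : Fin 2) : Fin 2 → ℂ :=
  if q = 0 then
    (if b = 0 then ![1, 0] else ![0, 1])
  else
    (if b = 0 then ![(((Real.sqrt 2)⁻¹ : ℝ) : ℂ), (((Real.sqrt 2)⁻¹ : ℝ) : ℂ)]
     else ![(((Real.sqrt 2)⁻¹ : ℝ) : ℂ), -(((Real.sqrt 2)⁻¹ : ℝ) : ℂ)])

/-- The intermediate basis states `|ψ_b⟩`, rotated by `π/8`. -/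
noncomputable def interBasis (b : Fin 2) : Fin 2 → ℂ :=
  if b = 0 then ![((Real.cos (Real.pi / 8) : ℝ) : ℂ), ((Real.sin (Real.pi / 8) : ℝ) : ℂ)]
  else ![((Real.cos (5 * Real.pi / 8) : ℝ) : ℂ), ((Real.sin (5 * Real.pi / 8) : ℝ) : ℂ)]

/-- The projective measurement `M_b = |ψ_b⟩⟨ψ_b|`. -/
noncomputable def interMeas (b : Fin 2) : Matrix (Fin 2) (Fin 2) ℂ :=
  vecMulVec (interBasis b) (star (interBasis b))

/-!
Every vector involved is a real unit vector `(cos θ, sin θ)`, and for such vectors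
`⟨φ|ψ⟩⟨ψ|φ⟩ = cos² (angle between them)`. Each BB84 state `H^q|b⟩` lies at angle `±π/8` modulo `π`
from `ψ_b`, so each of the four success probabilities is already `cos² (π/8)`.
-/

lemma re_star_dotProduct_vecMulVec_mulVec {ι : Type*} [Fintype ι] (ψ φ : ι → ℂ) :
    (star φ ⬝ᵥ vecMulVec ψ (star ψ) *ᵥ φ).re = ‖star ψ ⬝ᵥ φ‖ ^ 2 := by
  rw [vecMulVec_mulVec, op_smul_eq_smul, dotProduct_smul, smul_eq_mul, star_dotProduct φ ψ,
    Complex.star_def, Complex.mul_conj']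
  norm_cast

noncomputable def planeVec (θ : ℝ) : Fin 2 → ℂ :=
  ![(Real.cos θ : ℂ), (Real.sin θ : ℂ)]

lemma star_planeVec_dotProduct_planeVec (α θ : ℝ) :
    star (planeVec α) ⬝ᵥ planeVec θ = (Real.cos (α - θ) : ℂ) := by
  simp only [planeVec, dotProduct, Fin.sum_univ_two, Pi.star_apply, cons_val_zero, cons_val_one,
    Complex.star_def, Complex.conj_ofReal]
  push_cast [Real.cos_sub]
  ring

lemma interBasis_eq_planeVec (b : Fin 2) :
    interBasis b = planeVec (if b = 0 then Real.pi / 8 else 5 * Real.pi / 8) := by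
  fin_cases b <;> rfl

lemma bb84_eq_planeVec (q b : Fin 2) :
    bb84 q b = planeVec (if q = 0 then (if b = 0 then 0 else Real.pi / 2)
      else (if b = 0 then Real.pi / 4 else -(Real.pi / 4))) := by
  have h : (√2)⁻¹ = √2 / 2 := by field_simp; simp
  fin_cases q <;> fin_cases b <;>
    simp [bb84, planeVec, Real.cos_pi_div_four, Real.sin_pi_div_four, h]

lemma re_star_bb84_dotProduct_interMeas_mulVec (q b : Fin 2) :
    (star (bb84 q b) ⬝ᵥ (interMeas b).mulVec (bb84 q b)).re = Real.cos (Real.pi / 8) ^ 2 := by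
  rw [interMeas, re_star_dotProduct_vecMulVec_mulVec, interBasis_eq_planeVec, bb84_eq_planeVec,
    star_planeVec_dotProduct_planeVec, Complex.norm_real, Real.norm_eq_abs, sq_abs]
  fin_cases q <;> fin_cases b <;>
    simp only [Fin.zero_eta, Fin.mk_one, Fin.isValue, ↓reduceIte, one_ne_zero, sub_zero,
      sub_neg_eq_add]
  · rw [show 5 * Real.pi / 8 - Real.pi / 2 = Real.pi / 8 by ring]
  · rw [show Real.pi / 8 - Real.pi / 4 = -(Real.pi / 8) by ring, Real.cos_neg]
  · rw [show 5 * Real.pi / 8 + Real.pi / 4 = Real.pi - Real.pi / 8 by ring, Real.cos_pi_sub,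
      neg_sq]

theorem stmt_14 :
    (1 / 4) * ∑ q : Fin 2, ∑ b : Fin 2,
        (star (bb84 q b) ⬝ᵥ (interMeas b).mulVec (bb84 q b)).re
      = Real.cos (Real.pi / 8) ^ 2 := by
  simp only [re_star_bb84_dotProduct_interMeas_mulVec, Finset.sum_const, Finset.card_univ,
    Fintype.card_fin]
  ring
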